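/- Let a, b, c, d be pairwise distinct complex numbers with |a| = |b| = |c| = |d| = 1 and ac ≠ bd, and set w2 := (ac(b+d) − bd(a+c))/(ac − bd). Define p1 := ab(c − d)/(ac − bd), p2 := bc(a − d)/(ac − bd), p3 := cd(a − b)/(ac − bd), p4 := ad(c − b)/(ac − bd). Then |p1 − a| = |p1 − b| = |p1 − w2|, |p2 − b| = |p2 − c| = |p2 − w2|, |p3 − c| = |p3 − d| = |p3 − w2|, |p4 − a| = |p4 − d| = |p4 − w2| (so p1, p2, p3, p4 are the centers of the four circles C[a,b,w2], C[b,c,w2], C[c,d,w2], C[a,d,w2] through w2), and p1 + p3 = p2 + p4 = w2. Hence p1, p2, p3, p4 form the vertices of a parallelogram (rhomboid) whose center (p1 + p3)/2 = w2/2 is the euclidean midpoint of the segment [0, w2]. -/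

import Mathlib

open Complex

/-!
With `D = a c - b d`, the differences `p1 - a`, `p1 - b`, `p1 - w2` are `a c`, `b d`, `c d`
times `(b - a) / D`; these factors are unimodular, so `p1` is equidistant from `a`, `b`, `w2`.
The swaps `a ↔ c` and `b ↔ d` fix `w2` and `D` and carry `p1` to `p2`, `p3`, `p4`, which gives
the other three circles and reduces `p2 + p4 = w2` to `p1 + p3 = w2`.
-/

namespace RhomboidOfCircleCenters

/-- The intersection of the chords `[a, c]` and `[b, d]` of the unit circle. -/
noncomputable def chordIntersection (a b c d : ℂ) : ℂ :=
  (a * c * (b + d) - b * d * (a + c)) / (a * c - b * d)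

/-- The center of the circle through `a`, `b` and `chordIntersection a b c d`. -/
noncomputable def circleCenter (a b c d : ℂ) : ℂ :=
  a * b * (c - d) / (a * c - b * d)

lemma chordIntersection_swap_left (a b c d : ℂ) :
    chordIntersection c b a d = chordIntersection a b c d := by
  unfold chordIntersection; ring_nf

lemma chordIntersection_swap_right (a b c d : ℂ) :
    chordIntersection a d c b = chordIntersection a b c d := by
  unfold chordIntersection; ring_nf

lemma norm_mul_mul_of_norm_eq_one {u v : ℂ} (hu : ‖u‖ = 1) (hv : ‖v‖ = 1) (z : ℂ) :
    ‖u * v * z‖ = ‖z‖ := by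
  simp [hu, hv]

variable {a b c d : ℂ}

lemma circleCenter_equidistant (ha : ‖a‖ = 1) (hb : ‖b‖ = 1) (hc : ‖c‖ = 1) (hd : ‖d‖ = 1)
    (h : a * c ≠ b * d) :
    ‖circleCenter a b c d - a‖ = ‖circleCenter a b c d - b‖ ∧
      ‖circleCenter a b c d - b‖ = ‖circleCenter a b c d - chordIntersection a b c d‖ := by
  have hD : a * c - b * d ≠ 0 := sub_ne_zero.mpr h
  have hpa : circleCenter a b c d - a = a * c * ((b - a) / (a * c - b * d)) := by
    unfold circleCenter; field_simp; ring
  have hpb : circleCenter a b c d - b = b * d * ((b - a) / (a * c - b * d)) := by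
    unfold circleCenter; field_simp; ring
  have hpw : circleCenter a b c d - chordIntersection a b c d = c * d * ((b - a) / (a * c - b * d)) := by
    unfold circleCenter chordIntersection; field_simp; ring
  rw [hpa, hpb, hpw, norm_mul_mul_of_norm_eq_one ha hc, norm_mul_mul_of_norm_eq_one hb hd,
    norm_mul_mul_of_norm_eq_one hc hd]
  exact ⟨rfl, rfl⟩

lemma circleCenter_add_circleCenter (h : a * c ≠ b * d) :
    circleCenter a b c d + circleCenter c d a b = chordIntersection a b c d := by
  have hD : a * c - b * d ≠ 0 := sub_ne_zero.mpr h
  have hD' : c * a - d * b ≠ 0 := by rwa [mul_comm c, mul_comm d]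
  unfold circleCenter chordIntersection; field_simp; ring

end RhomboidOfCircleCenters

open RhomboidOfCircleCenters in
theorem rhomboid_of_circle_centers (a b c d : ℂ)
    (ha : ‖a‖ = 1) (hb : ‖b‖ = 1)
    (hc : ‖c‖ = 1) (hd : ‖d‖ = 1)
    (h2 : a * c ≠ b * d) :
    let w2 := (a * c * (b + d) - b * d * (a + c)) / (a * c - b * d)
    let p1 := a * b * (c - d) / (a * c - b * d)
    let p2 := b * c * (a - d) / (a * c - b * d)
    let p3 := c * d * (a - b) / (a * c - b * d)
    let p4 := a * d * (c - b) / (a * c - b * d)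
    (‖p1 - a‖ = ‖p1 - b‖ ∧
      ‖p1 - b‖ = ‖p1 - w2‖) ∧
    (‖p2 - b‖ = ‖p2 - c‖ ∧
      ‖p2 - c‖ = ‖p2 - w2‖) ∧
    (‖p3 - c‖ = ‖p3 - d‖ ∧
      ‖p3 - d‖ = ‖p3 - w2‖) ∧
    (‖p4 - a‖ = ‖p4 - d‖ ∧
      ‖p4 - d‖ = ‖p4 - w2‖) ∧
    p1 + p3 = w2 ∧ p2 + p4 = w2 ∧ (p1 + p3) / 2 = w2 / 2 := by
  intro w2 p1 p2 p3 p4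
  have hw2 : w2 = chordIntersection a b c d := rfl
  have hp1 : p1 = circleCenter a b c d := rfl
  have hp2 : p2 = circleCenter c b a d := by unfold p2 circleCenter; ring_nf
  have hp3 : p3 = circleCenter c d a b := by unfold p3 circleCenter; ring_nf
  have hp4 : p4 = circleCenter a d c b := by unfold p4 circleCenter; ring_nf
  have hca : c * a ≠ b * d := by rwa [mul_comm c]
  have hbd : a * c ≠ d * b := by rwa [mul_comm d]
  have hcadb : c * a ≠ d * b := by rwa [mul_comm c, mul_comm d]
  have h13 : p1 + p3 = w2 := by
    rw [hp1, hp3, hw2, circleCenter_add_circleCenter h2]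
  have h24 : p2 + p4 = w2 := by
    rw [hp2, hp4, hw2, circleCenter_add_circleCenter hca, chordIntersection_swap_left]
  refine ⟨circleCenter_equidistant ha hb hc hd h2, ?_, ?_, ?_, h13, h24, by rw [h13]⟩
  · rw [hp2, hw2, ← chordIntersection_swap_left]
    obtain ⟨hcb, hbw⟩ := circleCenter_equidistant hc hb ha hd hca
    exact ⟨hcb.symm, hcb.trans hbw⟩
  · rw [hp3, hw2, ← chordIntersection_swap_left, ← chordIntersection_swap_right c]
    exact circleCenter_equidistant hc hd ha hb hcadb
  · rw [hp4, hw2, ← chordIntersection_swap_right]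
    exact circleCenter_equidistant ha hd hc hb hbd
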